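/- Inversion for restriction: if Γ ⊢_B P ▶ T and P ≡ (νc)P', then T ≡ (νc)T' for some T' with Γ' ⊢_{B'} P' ▶ T' for some extended environment Γ' ⊇ Γ and buffer set B' ⊇ B. -/

import Mathlib

/-!
Typing is invariant under structural congruence, up to congruence of types and with the same
buffer set: each axiom of `PCong` is matched by the corresponding axiom of `Cong`, and scope
extrusion is sound because the free names of a typed process bound those of its type, which in
turn bound its buffers. So a process congruent to `(νc)P'` types `(νc)P'` itself at a type
congruent to `T`; that typing can only come from [res], whose premise types `P'` with a buffer
set `B'` such that `B = B' ∖ {c}`.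
-/

abbrev Name := ℕ
abbrev TVar := ℕ

inductive Pre where
  | snd : Name → Pre
  | rcv : Name → Pre
  | tau : Pre
deriving DecidableEq

inductive Ty where
  | nil  : Ty
  | pre  : Pre → Ty → Ty
  | ich  : Ty → Ty → Ty                   -- internal choice ⊕
  | ech  : Pre → Ty → Pre → Ty → Ty       -- external choice & of guarded types
  | par  : Ty → Ty → Ty
  | new  : Name → Ty → Ty                 -- (new a)T
  | cls  : Name → Ty → Ty                 -- end[a];T
  | res  : Name → Ty → Ty                 -- (νa)T
  | obuf : Name → Ty                      -- open buffer [a]°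
  | cbuf : Name → Ty                      -- closed buffer [a]•
  | tvar : TVar → List Name → Ty          -- t⟨ã⟩
deriving DecidableEq

/-- A system of mutually recursive type equations: each variable is mapped
to its formal parameters and its body. -/
abbrev Defs := TVar → List Name × Ty

def Pre.fn : Pre → Finset Name
  | .snd a => {a}
  | .rcv a => {a}
  | .tau   => ∅

def Ty.fn : Ty → Finset Name
  | .nil => ∅
  | .pre κ T => κ.fn ∪ T.fn
  | .ich T S => T.fn ∪ S.fn
  | .ech κ₁ T κ₂ S => κ₁.fn ∪ T.fn ∪ κ₂.fn ∪ S.fn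
  | .par T S => T.fn ∪ S.fn
  | .new a T => T.fn.erase a
  | .cls a T => insert a T.fn
  | .res a T => T.fn.erase a
  | .obuf a => {a}
  | .cbuf a => {a}
  | .tvar _ as => as.toFinset

/-- `lookupIdx xs as n` maps the i-th formal parameter of `xs` to the i-th
actual argument of `as`, leaving other names unchanged. -/
def lookupIdx : List Name → List Name → Name → Name
  | [], _, n => n
  | _ :: _, [], n => n
  | x :: xs, a :: as, n => if n = x then a else lookupIdx xs as n

def Pre.sub (f : Name → Name) : Pre → Pre
  | .snd a => .snd (f a)
  | .rcv a => .rcv (f a)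
  | .tau   => .tau

def Ty.sub (f : Name → Name) : Ty → Ty
  | .nil => .nil
  | .pre κ T => .pre (κ.sub f) (T.sub f)
  | .ich T S => .ich (T.sub f) (S.sub f)
  | .ech κ₁ T κ₂ S => .ech (κ₁.sub f) (T.sub f) (κ₂.sub f) (S.sub f)
  | .par T S => .par (T.sub f) (S.sub f)
  | .new a T => .new (f a) (T.sub f)
  | .cls a T => .cls (f a) (T.sub f)
  | .res a T => .res (f a) (T.sub f)
  | .obuf a => .obuf (f a)
  | .cbuf a => .cbuf (f a)
  | .tvar t as => .tvar t (as.map f)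

/-- Instantiation of the body of the equation for `t` with actual arguments `as`. -/
def instTy (D : Defs) (t : TVar) (as : List Name) : Ty :=
  (D t).2.sub (lookupIdx (D t).1 as)

inductive Lab where
  | snd : Name → Lab      -- ā
  | rcv : Name → Lab      -- a
  | tau : Lab
  | sync : Name → Lab     -- [a]
  | cls : Name → Lab      -- close request
  | clsd : Name → Lab     -- close acceptance
  | csnd : Name → Lab     -- send from closed channel
deriving DecidableEq

def Lab.fn : Lab → Finset Name
  | .snd a => {a}
  | .rcv a => {a}
  | .tau => ∅
  | .sync a => {a}
  | .cls a => {a}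
  | .clsd a => {a}
  | .csnd a => {a}

inductive Cong : Ty → Ty → Prop where
  | refl (T) : Cong T T
  | symm : Cong T S → Cong S T
  | trans : Cong T S → Cong S U → Cong T U
  | parComm : Cong (.par T S) (.par S T)
  | parAssoc : Cong (.par T (.par S U)) (.par (.par T S) U)
  | parNil : Cong (.par T .nil) T
  | resSwap : Cong (.res a (.res b T)) (.res b (.res a T))
  | resNil : Cong (.res a .nil) .nil
  | resCBuf : Cong (.res a (.cbuf a)) .nil
  | resOBuf : Cong (.res a (.obuf a)) .nil
  | scope : a ∉ Ty.fn T → Cong (.par T (.res a S)) (.res a (.par T S))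
  | parCong : Cong T T' → Cong S S' → Cong (.par T S) (.par T' S')
  | resCong : Cong T T' → Cong (.res a T) (.res a T')

inductive Step (D : Defs) : Ty → Lab → Ty → Prop where
  | snd : Step D (.pre (.snd a) T) (.snd a) T
  | rcv : Step D (.pre (.rcv a) T) (.rcv a) T
  | tau : Step D (.pre .tau T) .tau T
  | sel1 : Step D (.ich T S) .tau T
  | sel2 : Step D (.ich T S) .tau S
  | bra1 : Step D (.pre κ₁ T) α T' → Step D (.ech κ₁ T κ₂ S) α T'
  | bra2 : Step D (.pre κ₂ S) α S' → Step D (.ech κ₁ T κ₂ S) α S'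
  | parL : Step D T α T' → Step D (.par T S) α (.par T' S)
  | parR : Step D S α S' → Step D (.par T S) α (.par T S')
  | comL : Step D T (.snd a) T' → Step D S (.rcv a) S' →
      Step D (.par T S) (.sync a) (.par T' S')
  | comR : Step D T (.rcv a) T' → Step D S (.snd a) S' →
      Step D (.par T S) (.sync a) (.par T' S')
  | comCL : Step D T (.csnd a) T' → Step D S (.rcv a) S' →
      Step D (.par T S) (.sync a) (.par T' S')
  | comCR : Step D T (.rcv a) T' → Step D S (.csnd a) S' →
      Step D (.par T S) (.sync a) (.par T' S')
  | new : Step D (.new a T) .tau (.res a (.par T (.obuf a)))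
  | fin : Step D (.cls a T) (.cls a) T
  | buf : Step D (.obuf a) (.clsd a) (.cbuf a)
  | cld : Step D (.cbuf a) (.csnd a) (.cbuf a)
  | closeL : Step D T (.cls a) T' → Step D S (.clsd a) S' →
      Step D (.par T S) .tau (.par T' S')
  | closeR : Step D T (.clsd a) T' → Step D S (.cls a) S' →
      Step D (.par T S) .tau (.par T' S')
  | res1 : Step D T α T' → Lab.fn α ≠ {a} → Step D (.res a T) α (.res a T')
  | res2 : Step D T (.sync a) T' → Step D (.res a T) .tau (.res a T')
  | eq : Cong T T' → Step D T α T'' → Step D T' α T''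
  | defU : Step D (instTy D t as) α T' → Step D (.tvar t as) α T'

inductive Expr where
  | val : ℕ → Expr
  | evar : ℕ → Expr
  | esucc : Expr → Expr
deriving DecidableEq

inductive Eval : Expr → ℕ → Prop where
  | val : Eval (.val n) n
  | succ : Eval e n → Eval (.esucc e) (n + 1)

inductive Proc where
  | nil : Proc
  | snd : Name → Expr → Proc → Proc        -- u!⟨e⟩;P
  | rcv : Name → ℕ → Proc → Proc           -- u?(x);P
  | ptau : Proc → Proc                     -- τ;P
  | close : Name → Proc → Proc             -- close u;P
  | sel : Proc → Proc → Proc               -- select between two guarded processes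
  | ite : Expr → Proc → Proc → Proc        -- if e then P else Q
  | newc : Name → Proc → Proc              -- new channel
  | par : Proc → Proc → Proc
  | call : ℕ → List Expr → List Name → Proc -- X⟨ẽ, ũ⟩
  | resP : Name → Proc → Proc              -- (νc)P
  | buf : Name → Proc                      -- open (empty, synchronous) buffer
  | cbufP : Name → Proc                    -- closed buffer
deriving DecidableEq

/-- Process definitions: value parameters, channel parameters, body. -/
abbrev PDefs := ℕ → List ℕ × List Name × Proc

def Expr.vsub (x v : ℕ) : Expr → Expr
  | .val n => .val n
  | .evar y => if y = x then .val v else .evar y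
  | .esucc e => .esucc (e.vsub x v)

def Proc.vsub (x v : ℕ) : Proc → Proc
  | .nil => .nil
  | .snd c e P => .snd c (e.vsub x v) (P.vsub x v)
  | .rcv c y P => if y = x then .rcv c y P else .rcv c y (P.vsub x v)
  | .ptau P => .ptau (P.vsub x v)
  | .close c P => .close c (P.vsub x v)
  | .sel P Q => .sel (P.vsub x v) (Q.vsub x v)
  | .ite e P Q => .ite (e.vsub x v) (P.vsub x v) (Q.vsub x v)
  | .newc y P => .newc y (P.vsub x v)
  | .par P Q => .par (P.vsub x v) (Q.vsub x v)
  | .call X es cs => .call X (es.map (Expr.vsub x v)) cs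
  | .resP c P => .resP c (P.vsub x v)
  | .buf c => .buf c
  | .cbufP c => .cbufP c

def Proc.csub (f : Name → Name) : Proc → Proc
  | .nil => .nil
  | .snd c e P => .snd (f c) e (P.csub f)
  | .rcv c y P => .rcv (f c) y (P.csub f)
  | .ptau P => .ptau (P.csub f)
  | .close c P => .close (f c) (P.csub f)
  | .sel P Q => .sel (P.csub f) (Q.csub f)
  | .ite e P Q => .ite e (P.csub f) (Q.csub f)
  | .newc y P => .newc (f y) (P.csub f)
  | .par P Q => .par (P.csub f) (Q.csub f)
  | .call X es cs => .call X es (cs.map f)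
  | .resP c P => .resP (f c) (P.csub f)
  | .buf c => .buf (f c)
  | .cbufP c => .cbufP (f c)

def Proc.vsubs : List ℕ → List ℕ → Proc → Proc
  | [], _, P => P
  | _ :: _, [], P => P
  | x :: xs, v :: vs, P => Proc.vsubs xs vs (P.vsub x v)

/-- Instantiation of the body of definition `X` with values `vs` and channels `cs`. -/
def instP (D : PDefs) (X : ℕ) (vs : List ℕ) (cs : List Name) : Proc :=
  Proc.csub (lookupIdx (D X).2.1 cs) (Proc.vsubs (D X).1 vs (D X).2.2)

def Proc.pfn : Proc → Finset Name
  | .nil => ∅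
  | .snd c _ P => insert c P.pfn
  | .rcv c _ P => insert c P.pfn
  | .ptau P => P.pfn
  | .close c P => insert c P.pfn
  | .sel P Q => P.pfn ∪ Q.pfn
  | .ite _ P Q => P.pfn ∪ Q.pfn
  | .newc y P => P.pfn.erase y
  | .par P Q => P.pfn ∪ Q.pfn
  | .call _ _ cs => cs.toFinset
  | .resP c P => P.pfn.erase c
  | .buf c => {c}
  | .cbufP c => {c}

/-- Structural congruence on processes. -/
inductive PCong : Proc → Proc → Prop where
  | refl (P) : PCong P P
  | symm : PCong P Q → PCong Q P
  | trans : PCong P Q → PCong Q R → PCong P R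
  | parComm : PCong (.par P Q) (.par Q P)
  | parAssoc : PCong (.par P (.par Q R)) (.par (.par P Q) R)
  | parNil : PCong (.par P .nil) P
  | resSwap : PCong (.resP c (.resP d P)) (.resP d (.resP c P))
  | resNil : PCong (.resP c .nil) .nil
  | resBuf : PCong (.resP c (.buf c)) .nil
  | resCBuf : PCong (.resP c (.cbufP c)) .nil
  | scope : c ∉ Proc.pfn P → PCong (.par P (.resP c Q)) (.resP c (.par P Q))
  | parCong : PCong P P' → PCong Q Q' → PCong (.par P Q) (.par P' Q')
  | resCong : PCong P Q → PCong (.resP c P) (.resP c Q)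

/-- The (runtime) typing judgement `Γ ⊢_B P ▶ T` of Figure 4 (with a single
payload type, so the environment `Γ` is left implicit); `B` is the set of
channels with active buffers. -/
inductive Typed : Finset Name → Proc → Ty → Prop where
  | nil : Typed ∅ .nil .nil
  | snd : Typed ∅ P T → Typed ∅ (.snd c e P) (.pre (.snd c) T)
  | rcv : Typed ∅ P T → Typed ∅ (.rcv c x P) (.pre (.rcv c) T)
  | ptau : Typed ∅ P T → Typed ∅ (.ptau P) (.pre .tau T)
  | close : Typed ∅ P T → Typed ∅ (.close c P) (.cls c T)
  | sel : Typed ∅ g₁ (.pre κ₁ T₁) → Typed ∅ g₂ (.pre κ₂ T₂) →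
      Typed ∅ (.sel g₁ g₂) (.ech κ₁ T₁ κ₂ T₂)
  | ite : Typed ∅ P S → Typed ∅ Q T → Typed ∅ (.ite e P Q) (.ich S T)
  | newc : Typed ∅ P T → Typed ∅ (.newc y P) (.new y T)
  | callP : Typed ∅ (.call X es cs) (.tvar X cs)
  | par : Typed B₁ P T → Typed B₂ Q S → Disjoint B₁ B₂ →
      Typed (B₁ ∪ B₂) (.par P Q) (.par T S)
  | res : Typed B P T → Typed (B.erase c) (.resP c P) (.res c T)
  | buf : Typed {c} (.buf c) (.obuf c)
  | cbuf : Typed {c} (.cbufP c) (.cbuf c)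

namespace Typed

theorem fn_subset_pfn {B : Finset Name} {P : Proc} {T : Ty} (h : Typed B P T) :
    T.fn ⊆ P.pfn := by
  induction h <;> intro x <;> simp only [Ty.fn, Pre.fn, Proc.pfn] at * <;> aesop

theorem subset_fn {B : Finset Name} {P : Proc} {T : Ty} (h : Typed B P T) : B ⊆ T.fn := by
  induction h <;> intro x <;> simp only [Ty.fn, Pre.fn] at * <;> aesop

end Typed

def TypingTransfers (P Q : Proc) : Prop :=
  ∀ ⦃B T⦄, Typed B P T → ∃ T', Cong T T' ∧ Typed B Q T'

def TypingEquiv (P Q : Proc) : Prop :=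
  TypingTransfers P Q ∧ TypingTransfers Q P

namespace TypingTransfers

theorem trans {P Q R : Proc} (hPQ : TypingTransfers P Q) (hQR : TypingTransfers Q R) :
    TypingTransfers P R := fun _ _ hP =>
  let ⟨_, hT, hQ⟩ := hPQ hP
  let ⟨T', hT', hR⟩ := hQR hQ
  ⟨T', hT.trans hT', hR⟩

theorem par {P P' Q Q' : Proc} (hP : TypingTransfers P P') (hQ : TypingTransfers Q Q') :
    TypingTransfers (.par P Q) (.par P' Q') := by
  intro _ _ h
  cases h with
  | par hPT hQS hd =>
    obtain ⟨_, hT, hP'⟩ := hP hPT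
    obtain ⟨_, hS, hQ'⟩ := hQ hQS
    exact ⟨_, .parCong hT hS, .par hP' hQ' hd⟩

theorem res {P Q : Proc} (c : Name) (h : TypingTransfers P Q) :
    TypingTransfers (.resP c P) (.resP c Q) := by
  intro _ _ hres
  cases hres with
  | res hP =>
    obtain ⟨_, hT, hQ⟩ := h hP
    exact ⟨_, .resCong hT, .res hQ⟩

end TypingTransfers

namespace TypingEquiv

theorem refl (P : Proc) : TypingEquiv P P :=
  ⟨fun _ T h => ⟨T, .refl T, h⟩, fun _ T h => ⟨T, .refl T, h⟩⟩

theorem symm {P Q : Proc} (h : TypingEquiv P Q) : TypingEquiv Q P := ⟨h.2, h.1⟩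

theorem trans {P Q R : Proc} (hPQ : TypingEquiv P Q) (hQR : TypingEquiv Q R) :
    TypingEquiv P R :=
  ⟨hPQ.1.trans hQR.1, hQR.2.trans hPQ.2⟩

theorem par {P P' Q Q' : Proc} (hP : TypingEquiv P P') (hQ : TypingEquiv Q Q') :
    TypingEquiv (.par P Q) (.par P' Q') :=
  ⟨hP.1.par hQ.1, hP.2.par hQ.2⟩

theorem res {P Q : Proc} (c : Name) (h : TypingEquiv P Q) :
    TypingEquiv (.resP c P) (.resP c Q) :=
  ⟨h.1.res c, h.2.res c⟩

end TypingEquiv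

theorem typingTransfers_parComm (P Q : Proc) : TypingTransfers (.par P Q) (.par Q P) := by
  intro _ _ h
  cases h with
  | par hP hQ hd => exact ⟨_, .parComm, by rw [Finset.union_comm]; exact .par hQ hP hd.symm⟩

theorem typingEquiv_parComm (P Q : Proc) : TypingEquiv (.par P Q) (.par Q P) :=
  ⟨typingTransfers_parComm P Q, typingTransfers_parComm Q P⟩

theorem typingEquiv_parAssoc (P Q R : Proc) :
    TypingEquiv (.par P (.par Q R)) (.par (.par P Q) R) := by
  constructor
  · intro _ _ h
    cases h with
    | par hP hQR hd =>
      cases hQR with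
      | par hQ hR hQR =>
        rw [Finset.disjoint_union_right] at hd
        refine ⟨_, .parAssoc, ?_⟩
        rw [← Finset.union_assoc]
        exact .par (.par hP hQ hd.1) hR (Finset.disjoint_union_left.2 ⟨hd.2, hQR⟩)
  · intro _ _ h
    cases h with
    | par hPQ hR hd =>
      cases hPQ with
      | par hP hQ hPQ =>
        rw [Finset.disjoint_union_left] at hd
        refine ⟨_, .symm .parAssoc, ?_⟩
        rw [Finset.union_assoc]
        exact .par hP (.par hQ hR hd.2) (Finset.disjoint_union_right.2 ⟨hPQ, hd.1⟩)

theorem typingEquiv_parNil (P : Proc) : TypingEquiv (.par P .nil) P := by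
  constructor
  · intro _ _ h
    cases h with
    | par hP hnil => cases hnil; exact ⟨_, .parNil, by simpa using hP⟩
  · intro B _ hP
    exact ⟨_, .symm .parNil, by simpa using hP.par .nil (Finset.disjoint_empty_right B)⟩

theorem typingTransfers_resSwap (c d : Name) (P : Proc) :
    TypingTransfers (.resP c (.resP d P)) (.resP d (.resP c P)) := by
  intro _ _ h
  cases h with
  | res h =>
    cases h with
    | res hP => exact ⟨_, .resSwap, by rw [Finset.erase_right_comm]; exact hP.res.res⟩

theorem typingEquiv_resSwap (c d : Name) (P : Proc) :
    TypingEquiv (.resP c (.resP d P)) (.resP d (.resP c P)) :=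
  ⟨typingTransfers_resSwap c d P, typingTransfers_resSwap d c P⟩

theorem typingEquiv_resNil (c : Name) : TypingEquiv (.resP c .nil) .nil := by
  constructor
  · intro _ _ h
    cases h with
    | res hnil => cases hnil; exact ⟨_, .resNil, by simpa using Typed.nil⟩
  · intro _ _ h
    cases h
    exact ⟨_, .symm .resNil, by simpa using Typed.nil.res (c := c)⟩

theorem typingEquiv_resBuf (c : Name) : TypingEquiv (.resP c (.buf c)) .nil := by
  constructor
  · intro _ _ h
    cases h with
    | res hbuf => cases hbuf; exact ⟨_, .resOBuf, by simpa using Typed.nil⟩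
  · intro _ _ h
    cases h
    exact ⟨_, .symm .resOBuf, by simpa using (Typed.buf (c := c)).res (c := c)⟩

theorem typingEquiv_resCBuf (c : Name) : TypingEquiv (.resP c (.cbufP c)) .nil := by
  constructor
  · intro _ _ h
    cases h with
    | res hbuf => cases hbuf; exact ⟨_, .resCBuf, by simpa using Typed.nil⟩
  · intro _ _ h
    cases h
    exact ⟨_, .symm .resCBuf, by simpa using (Typed.cbuf (c := c)).res (c := c)⟩

theorem typingEquiv_scope {c : Name} {P : Proc} (hc : c ∉ P.pfn) (Q : Proc) :
    TypingEquiv (.par P (.resP c Q)) (.resP c (.par P Q)) := by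
  have fresh : ∀ {B T}, Typed B P T → c ∉ T.fn ∧ c ∉ B := fun hP =>
    ⟨fun h => hc (hP.fn_subset_pfn h), fun h => hc (hP.fn_subset_pfn (hP.subset_fn h))⟩
  constructor
  · intro _ _ h
    cases h with
    | par hP hres hd =>
      cases hres with
      | res hQ =>
        obtain ⟨hcT, hcB⟩ := fresh hP
        rw [← Finset.disjoint_erase_comm, Finset.erase_eq_of_notMem hcB] at hd
        refine ⟨_, .scope hcT, ?_⟩
        rw [← Finset.erase_eq_of_notMem hcB, ← Finset.erase_union_distrib]
        exact (hP.par hQ hd).res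
  · intro _ _ h
    cases h with
    | res hPQ =>
      cases hPQ with
      | par hP hQ hd =>
        obtain ⟨hcT, hcB⟩ := fresh hP
        refine ⟨_, .symm (.scope hcT), ?_⟩
        rw [Finset.erase_union_distrib, Finset.erase_eq_of_notMem hcB]
        exact hP.par hQ.res (hd.mono_right (Finset.erase_subset _ _))

theorem PCong.typingEquiv {P Q : Proc} (h : PCong P Q) : TypingEquiv P Q := by
  induction h with
  | refl P => exact .refl P
  | symm _ ih => exact ih.symm
  | trans _ _ ih₁ ih₂ => exact ih₁.trans ih₂
  | parComm => exact typingEquiv_parComm _ _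
  | parAssoc => exact typingEquiv_parAssoc _ _ _
  | parNil => exact typingEquiv_parNil _
  | resSwap => exact typingEquiv_resSwap _ _ _
  | resNil => exact typingEquiv_resNil _
  | resBuf => exact typingEquiv_resBuf _
  | resCBuf => exact typingEquiv_resCBuf _
  | scope hc => exact typingEquiv_scope hc _
  | parCong _ _ ih₁ ih₂ => exact ih₁.par ih₂
  | resCong _ ih => exact ih.res _

/-- Lemma A.7(1) (Inversion for restriction): if `Γ ⊢_B P ▶ T` and
`P ≡ (νc)P'`, then `T ≡ (νc)T'` for some `T'` typing `P'` with a buffer set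
`B' ⊇ B`. -/
theorem inversion_res {B : Finset Name} {P P' : Proc} {T : Ty} {c : Name}
    (h : Typed B P T) (hc : PCong P (.resP c P')) :
    ∃ (T' : Ty) (B' : Finset Name), B ⊆ B' ∧ Cong T (.res c T') ∧
      Typed B' P' T' := by
  obtain ⟨_, hT, hres⟩ := hc.typingEquiv.1 h
  cases hres with
  | res hP' => exact ⟨_, _, Finset.erase_subset _ _, hT, hP'⟩
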